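/- Let φ be a traceless symmetric n×n real matrix (n ≥ 2). Then the trace of φ³ satisfies -((n-2)/√(n(n-1)))·|φ|³ ≤ tr(φ³) ≤ ((n-2)/√(n(n-1)))·|φ|³, where |φ| is the Frobenius norm of φ. -/

import Mathlib

/-!
Diagonalising `φ` reduces the inequality to real numbers `a₁, …, aₙ` with `∑ aᵢ = 0` and
`∑ aᵢ² = β²`. Cauchy–Schwarz on the other `n - 1` entries bounds each `aᵢ` by `c = (n - 1) β / r`,
where `r = √(n(n - 1))`, and summing the pointwise inequality `(c - aᵢ)(aᵢ + β / r)² ≥ 0` gives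
`∑ aᵢ³ ≤ (n - 2) β³ / r`. The lower bound is the same inequality for `-a`.
-/

open Finset

namespace Matrix.IsHermitian

variable {𝕜 ι : Type*} [RCLike 𝕜] [Fintype ι] [DecidableEq ι] {A : Matrix ι ι 𝕜}

theorem trace_pow_eq_sum_eigenvalues_pow (hA : A.IsHermitian) (k : ℕ) :
    (A ^ k).trace = ∑ i, (hA.eigenvalues i : 𝕜) ^ k := by
  conv_lhs => rw [hA.spectral_theorem, ← map_pow]
  rw [Unitary.conjStarAlgAut_apply, trace_mul_cycle,
    Unitary.coe_star_mul_self, one_mul, diagonal_pow, trace_diagonal]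
  rfl

end Matrix.IsHermitian

section PowerSums

variable {ι : Type*} [Fintype ι]

theorem card_mul_sq_le_of_sum_eq_zero {a : ι → ℝ} (ha : ∑ j, a j = 0) (i : ι) :
    Fintype.card ι * a i ^ 2 ≤ (Fintype.card ι - 1) * ∑ j, a j ^ 2 := by
  classical
  have hcs := sq_sum_le_card_mul_sum_sq (s := univ.erase i) (f := a)
  rw [sum_erase_eq_sub (mem_univ i), sum_erase_eq_sub (mem_univ i), ha,
    card_erase_of_mem (mem_univ i), card_univ, Nat.cast_pred (Fintype.card_pos_iff.2 ⟨i⟩)] at hcs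
  linarith

theorem pow_three_le_of_le {x c : ℝ} (h : x ≤ c) (b : ℝ) :
    x ^ 3 ≤ (c - 2 * b) * x ^ 2 + (2 * c * b - b ^ 2) * x + c * b ^ 2 := by
  linear_combination mul_nonneg (sub_nonneg.2 h) (sq_nonneg (x + b))

theorem sum_pow_three_le_of_le {x : ι → ℝ} {c : ℝ} (hx : ∑ i, x i = 0) (h : ∀ i, x i ≤ c)
    (b : ℝ) : ∑ i, x i ^ 3 ≤ (c - 2 * b) * ∑ i, x i ^ 2 + Fintype.card ι * c * b ^ 2 := by
  calc ∑ i, x i ^ 3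
      ≤ ∑ i, ((c - 2 * b) * x i ^ 2 + (2 * c * b - b ^ 2) * x i + c * b ^ 2) :=
        sum_le_sum fun i _ => pow_three_le_of_le (h i) b
    _ = (c - 2 * b) * ∑ i, x i ^ 2 + Fintype.card ι * c * b ^ 2 := by
        simp only [sum_add_distrib, ← mul_sum, hx, sum_const, card_univ, nsmul_eq_mul]
        ring

theorem sum_pow_three_le_of_sum_eq_zero (hι : 2 ≤ Fintype.card ι) {a : ι → ℝ}
    (ha : ∑ i, a i = 0) :
    ∑ i, a i ^ 3 ≤ ((Fintype.card ι : ℝ) - 2) / √(Fintype.card ι * (Fintype.card ι - 1)) *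
      √(∑ i, a i ^ 2) ^ 3 := by
  have hn : (2 : ℝ) ≤ Fintype.card ι := by exact_mod_cast hι
  set n : ℝ := (Fintype.card ι : ℝ)
  set S := ∑ i, a i ^ 2
  have hnn : 0 < n * (n - 1) := by nlinarith
  set r := √(n * (n - 1))
  set β := √S
  have hr : 0 < r := Real.sqrt_pos.2 hnn
  have hr2 : r ^ 2 = n * (n - 1) := Real.sq_sqrt hnn.le
  have hβ2 : β ^ 2 = S := Real.sq_sqrt (sum_nonneg fun i _ => sq_nonneg _)
  have hbound : ∀ i, a i ≤ (n - 1) * β / r := fun i => by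
    rw [le_div_iff₀ hr, mul_comm]
    refine le_of_sq_le_sq ?_ (mul_nonneg (by linarith) (Real.sqrt_nonneg _))
    nlinarith [card_mul_sq_le_of_sum_eq_zero ha i]
  calc ∑ i, a i ^ 3
      ≤ ((n - 1) * β / r - 2 * (β / r)) * S + n * ((n - 1) * β / r) * (β / r) ^ 2 :=
        sum_pow_three_le_of_le ha hbound (β / r)
    _ = (n - 2) / r * β ^ 3 := by
        rw [← hβ2]
        field_simp
        linear_combination (-β ^ 3) * hr2

theorem abs_sum_pow_three_le_of_sum_eq_zero (hι : 2 ≤ Fintype.card ι) {a : ι → ℝ}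
    (ha : ∑ i, a i = 0) :
    |∑ i, a i ^ 3| ≤ ((Fintype.card ι : ℝ) - 2) / √(Fintype.card ι * (Fintype.card ι - 1)) *
      √(∑ i, a i ^ 2) ^ 3 := by
  refine abs_le.2 ⟨?_, sum_pow_three_le_of_sum_eq_zero hι ha⟩
  have := sum_pow_three_le_of_sum_eq_zero hι (a := -a) (by simp [ha])
  simp only [Pi.neg_apply, Odd.neg_pow (by decide : Odd 3), Even.neg_pow (by decide : Even 2),
    sum_neg_distrib] at this
  linarith

end PowerSums

/-- Okumura's inequality: for a traceless symmetric real n×n matrix φ (n ≥ 2),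
    -((n-2)/√(n(n-1)))·|φ|³ ≤ tr(φ³) ≤ ((n-2)/√(n(n-1)))·|φ|³,
    where |φ| = √(tr(φ²)) is the Frobenius norm. -/
theorem okumura_inequality (n : ℕ) (hn : 2 ≤ n)
    (φ : Matrix (Fin n) (Fin n) ℝ) (hsym : φ.IsSymm) (htr : φ.trace = 0) :
    -(((n : ℝ) - 2) / Real.sqrt (n * (n - 1))) * (Real.sqrt ((φ * φ).trace)) ^ 3
      ≤ (φ * φ * φ).trace ∧
    (φ * φ * φ).trace
      ≤ (((n : ℝ) - 2) / Real.sqrt (n * (n - 1))) * (Real.sqrt ((φ * φ).trace)) ^ 3 := by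
  have hφ : φ.IsHermitian := Matrix.isHermitian_iff_isSymm.2 hsym
  have htrace (k : ℕ) : (φ ^ k).trace = ∑ i, hφ.eigenvalues i ^ k :=
    hφ.trace_pow_eq_sum_eigenvalues_pow k
  rw [← pow_one φ, htrace] at htr
  rw [← pow_three', ← sq, htrace, htrace, neg_mul, ← abs_le]
  simpa using abs_sum_pow_three_le_of_sum_eq_zero (by simpa using hn) htr
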